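/- With D, A, A*, P as in the Leonard pair setup, P A* = A P. -/

import Mathlib

/-- Pochhammer symbol `(a)_n = a(a+1)⋯(a+n-1)`. -/
noncomputable def poch (a : ℝ) (n : ℕ) : ℝ := ∏ k ∈ Finset.range n, (a + k)

/-- The terminating hypergeometric sum
`₄F₃[−i, i+1, −j, j+1; 1, D+2, −D; 1] = Σ_{n=0}^{min(i,j)} …`. -/
noncomputable def F4 (D i j : ℕ) : ℝ :=
  ∑ n ∈ Finset.range (min i j + 1),
    (poch (-(i : ℝ)) n * poch ((i : ℝ) + 1) n * poch (-(j : ℝ)) n * poch ((j : ℝ) + 1) n) /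
      (poch 1 n * poch ((D : ℝ) + 2) n * poch (-(D : ℝ)) n * (n.factorial : ℝ))

/-- The matrix `P` with entries `P_{i,j} = (2j+1)·₄F₃[−i,i+1,−j,j+1;1,D+2,−D;1]`. -/
noncomputable def Pmat (D : ℕ) : Matrix (Fin (D + 1)) (Fin (D + 1)) ℝ :=
  fun i j => (2 * ((j : ℕ) : ℝ) + 1) * F4 D (i : ℕ) (j : ℕ)

/-- `a_i = 3i(i+1)/(D(D+2))`. -/
noncomputable def aa (D i : ℕ) : ℝ := 3 * (i : ℝ) * ((i : ℝ) + 1) / ((D : ℝ) * ((D : ℝ) + 2))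

/-- `b_i = 3(D−i)(i+1)(D+i+2)/(D(D+2)(2i+1))`. -/
noncomputable def bb (D i : ℕ) : ℝ :=
  3 * ((D : ℝ) - i) * ((i : ℝ) + 1) * ((D : ℝ) + i + 2) /
    ((D : ℝ) * ((D : ℝ) + 2) * (2 * (i : ℝ) + 1))

/-- `c_i = 3(D−i+1)i(D+i+1)/(D(D+2)(2i+1))`. -/
noncomputable def cc (D i : ℕ) : ℝ :=
  3 * ((D : ℝ) - i + 1) * (i : ℝ) * ((D : ℝ) + i + 1) /
    ((D : ℝ) * ((D : ℝ) + 2) * (2 * (i : ℝ) + 1))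

/-- `θ_i = 3 − 2a_i = 3 − 6i(i+1)/(D(D+2))`. -/
noncomputable def theta (D i : ℕ) : ℝ := 3 - 2 * aa D i

/-- The irreducible tridiagonal matrix `A`. -/
noncomputable def Amat (D : ℕ) : Matrix (Fin (D + 1)) (Fin (D + 1)) ℝ :=
  fun i j =>
    if (i : ℕ) = (j : ℕ) then aa D (i : ℕ)
    else if (j : ℕ) = (i : ℕ) + 1 then bb D (i : ℕ)
    else if (i : ℕ) = (j : ℕ) + 1 then cc D (i : ℕ)
    else 0

/-- The diagonal matrix `A* = diag(θ_0,…,θ_D)`. -/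
noncomputable def Astar (D : ℕ) : Matrix (Fin (D + 1)) (Fin (D + 1)) ℝ :=
  Matrix.diagonal fun i => theta D (i : ℕ)

/-!
Write `P_{i,j} = (2j+1) F(i,j)` with `F(i,j) = Σₙ (−i)ₙ(i+1)ₙ (−j)ₙ(j+1)ₙ / dₙ`, a Racah
polynomial of degree `j` in `λ(i) = i(i+1)`. The claim is the three-term recurrence
`c_i F(i−1,j) + a_i F(i,j) + b_i F(i+1,j) = θ_j F(i,j)`. The tridiagonal operator on the left sends
the basis function `(−x)ₙ(x+1)ₙ` to `θₙ (−x)ₙ(x+1)ₙ + μₙ (−x)ₙ₋₁(x+1)ₙ₋₁`, and since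
`(θₙ − θ_j)(−j)ₙ(j+1)ₙ` is a multiple of `(−j)ₙ₊₁(j+1)ₙ₊₁`, the two resulting error sums are the
same sum with opposite signs.
-/

open Finset

section Pochhammer

lemma poch_zero (a : ℝ) : poch a 0 = 1 := prod_range_zero _

lemma poch_succ (a : ℝ) (n : ℕ) : poch a (n + 1) = poch a n * (a + n) := prod_range_succ _ n

lemma poch_succ' (a : ℝ) (n : ℕ) : poch a (n + 1) = a * poch (a + 1) n := by
  rw [poch, prod_range_succ', poch, mul_comm]
  push_cast
  simp only [add_zero, add_assoc, add_comm (1 : ℝ)]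

lemma poch_neg_natCast_of_lt {i n : ℕ} (h : i < n) : poch (-(i : ℝ)) n = 0 :=
  prod_eq_zero (mem_range.mpr h) (by simp)

lemma poch_pos {a : ℝ} (ha : 0 < a) (n : ℕ) : 0 < poch a n :=
  prod_pos fun k _ => by positivity

lemma poch_neg_natCast_ne_zero {D n : ℕ} (h : n ≤ D) : poch (-(D : ℝ)) n ≠ 0 := by
  refine prod_ne_zero_iff.mpr fun k hk => ?_
  have : (k : ℝ) < D := by exact_mod_cast (mem_range.mp hk).trans_le h
  linarith

end Pochhammer

section RacahBasis

noncomputable def racahBasis (x : ℝ) (n : ℕ) : ℝ := poch (-x) n * poch (x + 1) n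

lemma racahBasis_zero (x : ℝ) : racahBasis x 0 = 1 := by simp [racahBasis, poch_zero]

lemma racahBasis_succ (x : ℝ) (n : ℕ) :
    racahBasis x (n + 1) = racahBasis x n * ((n - x) * (n + x + 1)) := by
  rw [racahBasis, racahBasis, poch_succ, poch_succ]
  ring

lemma racahBasis_add_one_succ (x : ℝ) (n : ℕ) :
    racahBasis (x + 1) (n + 1) = -((n + x + 1) * (n + x + 2)) * racahBasis x n := by
  have h := poch_succ' (x + 1) n
  rw [poch_succ] at h
  rw [racahBasis, racahBasis, poch_succ', poch_succ]
  ring_nf at h ⊢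
  linear_combination poch (-x) n * (2 + x + n) * h

lemma racahBasis_sub_one_succ (x : ℝ) (n : ℕ) :
    racahBasis (x - 1) (n + 1) = -((n + 1 - x) * (n - x)) * racahBasis x n := by
  have h := poch_succ' (-x) n
  rw [poch_succ] at h
  rw [racahBasis, racahBasis, poch_succ, poch_succ', sub_add_cancel]
  ring_nf at h ⊢
  linear_combination poch (1 + x) n * (1 + n - x) * h

lemma racahBasis_natCast_of_lt {j n : ℕ} (h : j < n) : racahBasis j n = 0 := by
  rw [racahBasis, poch_neg_natCast_of_lt h, zero_mul]

end RacahBasis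

lemma cc_zero (D : ℕ) : cc D 0 = 0 := by simp [cc]

lemma bb_self (D : ℕ) : bb D D = 0 := by simp [bb]

section ThreeTermRecurrence

variable {D : ℕ}

noncomputable def racahDenom (D n : ℕ) : ℝ :=
  poch 1 n * poch ((D : ℝ) + 2) n * poch (-(D : ℝ)) n * (n.factorial : ℝ)

lemma racahDenom_succ (D n : ℕ) :
    racahDenom D (n + 1) = racahDenom D n * ((n + 1) * (D + n + 2) * (n - D) * (n + 1)) := by
  rw [racahDenom, racahDenom, poch_succ, poch_succ, poch_succ, Nat.factorial_succ]
  push_cast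
  ring

lemma racahDenom_ne_zero {n : ℕ} (h : n ≤ D) : racahDenom D n ≠ 0 := by
  have h1 := poch_pos one_pos n
  have h2 := poch_pos (by positivity : (0 : ℝ) < D + 2) n
  have h3 := poch_neg_natCast_ne_zero h
  unfold racahDenom
  positivity

noncomputable def racahSum (D j : ℕ) (x : ℝ) : ℝ :=
  ∑ n ∈ range (j + 1), racahBasis x n * racahBasis j n / racahDenom D n

lemma F4_eq_racahSum (D i j : ℕ) : F4 D i j = racahSum D j i := by
  calc F4 D i j
      = ∑ n ∈ range (min i j + 1), racahBasis i n * racahBasis j n / racahDenom D n :=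
        sum_congr rfl fun n _ => by rw [racahBasis, racahBasis, racahDenom]; ring
    _ = racahSum D j i := by
        refine sum_subset (range_subset_range.mpr (by omega)) fun n hn hni => ?_
        have : i < n := by simp only [mem_range] at hn hni; omega
        rw [racahBasis_natCast_of_lt this, zero_mul, zero_div]

/-- `μₙ`, the coefficient of `(−x)ₙ₋₁(x+1)ₙ₋₁` in `racahBasis_recurrence`; it vanishes at
`n = 0`, where `n - 1` truncates to `0`. -/
noncomputable def racahLower (D n : ℕ) : ℝ :=
  6 * (n : ℝ) ^ 2 * (D + n + 1) * (n - 1 - D) / (D * (D + 2))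

lemma racahLower_succ_div {n : ℕ} (hn : n < D) :
    racahLower D (n + 1) / racahDenom D (n + 1) = 6 / (D * (D + 2)) / racahDenom D n := by
  have hd := racahDenom_ne_zero hn.le
  have hnD : (n : ℝ) - D ≠ 0 := sub_ne_zero.mpr (by exact_mod_cast hn.ne)
  rw [racahLower, racahDenom_succ]
  push_cast
  field_simp
  ring

lemma racahBasis_recurrence (hD : D ≠ 0) (i n : ℕ) :
    cc D i * racahBasis ((i : ℝ) - 1) n + aa D i * racahBasis i n
        + bb D i * racahBasis ((i : ℝ) + 1) n =
      theta D n * racahBasis i n + racahLower D n * racahBasis i (n - 1) := by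
  have h2i : (2 * (i : ℝ) + 1) ≠ 0 := by positivity
  have hD' : (D : ℝ) ≠ 0 := by exact_mod_cast hD
  cases n with
  | zero =>
    simp only [racahBasis_zero, cc, aa, bb, theta, racahLower]
    field_simp
    ring
  | succ n =>
    rw [racahBasis_sub_one_succ, racahBasis_add_one_succ, racahBasis_succ, Nat.add_sub_cancel]
    simp only [cc, aa, bb, theta, racahLower]
    push_cast
    field_simp
    ring

lemma theta_sub_theta_mul_racahBasis (D j n : ℕ) :
    (theta D n - theta D j) * racahBasis j n = -(6 / (D * (D + 2))) * racahBasis j (n + 1) := by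
  rw [racahBasis_succ, theta, theta, aa, aa]
  ring

lemma racahSum_recurrence (hD : D ≠ 0) (i : ℕ) {j : ℕ} (hj : j ≤ D) :
    cc D i * racahSum D j ((i : ℝ) - 1) + aa D i * racahSum D j i
        + bb D i * racahSum D j ((i : ℝ) + 1) = theta D j * racahSum D j i := by
  set E := ∑ n ∈ range j, racahBasis i n * racahBasis j (n + 1) / racahDenom D n
  have h_diag : ∑ n ∈ range (j + 1),
      (theta D n - theta D j) * (racahBasis i n * racahBasis j n / racahDenom D n) =
        -(6 / (D * (D + 2))) * E := by
    rw [sum_range_succ, sub_self, zero_mul, add_zero, mul_sum]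
    refine sum_congr rfl fun n _ => ?_
    linear_combination racahBasis i n / racahDenom D n * theta_sub_theta_mul_racahBasis D j n
  have h_lower : ∑ n ∈ range (j + 1),
      racahLower D n * racahBasis i (n - 1) * (racahBasis j n / racahDenom D n) =
        6 / (D * (D + 2)) * E := by
    rw [sum_range_succ', mul_sum]
    simp only [racahLower, Nat.cast_zero, Nat.add_sub_cancel, ne_eq, OfNat.ofNat_ne_zero,
      not_false_eq_true, zero_pow, mul_zero, zero_mul, zero_div, add_zero]
    refine sum_congr rfl fun n hn => ?_
    have h := racahLower_succ_div (lt_of_lt_of_le (mem_range.mp hn) hj)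
    rw [racahLower] at h
    linear_combination racahBasis i n * racahBasis j (n + 1) * h
  calc _ = ∑ n ∈ range (j + 1),
        (theta D n * racahBasis i n + racahLower D n * racahBasis i (n - 1)) *
          (racahBasis j n / racahDenom D n) := by
        simp only [racahSum, mul_sum, ← sum_add_distrib, ← racahBasis_recurrence hD i]
        exact sum_congr rfl fun n _ => by ring
    _ = theta D j * racahSum D j i +
        (∑ n ∈ range (j + 1),
          (theta D n - theta D j) * (racahBasis i n * racahBasis j n / racahDenom D n) +
        ∑ n ∈ range (j + 1),
          racahLower D n * racahBasis i (n - 1) * (racahBasis j n / racahDenom D n)) := by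
        simp only [racahSum, mul_sum, ← sum_add_distrib]
        exact sum_congr rfl fun n _ => by ring
    _ = theta D j * racahSum D j i := by rw [h_diag, h_lower]; ring

lemma F4_recurrence (hD : D ≠ 0) (i : ℕ) {j : ℕ} (hj : j ≤ D) :
    cc D i * F4 D (i - 1) j + aa D i * F4 D i j + bb D i * F4 D (i + 1) j =
      theta D j * F4 D i j := by
  have h_pred : cc D i * F4 D (i - 1) j = cc D i * racahSum D j ((i : ℝ) - 1) := by
    rcases i with _ | i
    · rw [cc_zero, zero_mul, zero_mul]
    · rw [F4_eq_racahSum, Nat.add_sub_cancel]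
      push_cast
      ring_nf
  rw [h_pred, F4_eq_racahSum, F4_eq_racahSum]
  push_cast
  exact racahSum_recurrence hD i hj

end ThreeTermRecurrence

lemma sum_Amat_mul (D : ℕ) (i : Fin (D + 1)) (Q : ℕ → ℝ) :
    ∑ m : Fin (D + 1), Amat D i m * Q m =
      cc D i * Q (i - 1) + aa D i * Q i + bb D i * Q (i + 1) := by
  have h_split : ∀ m ∈ range (D + 1),
      (if (i : ℕ) = m then aa D i else if m = i + 1 then bb D i
        else if (i : ℕ) = m + 1 then cc D i else 0) * Q m =
      (if m + 1 = i then cc D i * Q m else 0) + (if m = i then aa D i * Q i else 0) +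
        (if m = i + 1 then bb D i * Q (i + 1) else 0) := by
    intro m _
    split_ifs <;> (try subst_vars) <;> first | omega | ring
  have h_sub : ∑ m ∈ range (D + 1), (if m + 1 = i then cc D i * Q m else 0) =
      cc D i * Q (i - 1) := by
    obtain ⟨_ | k, hk⟩ := i
    · simp [cc_zero]
    · simp only [Nat.add_right_cancel_iff, sum_ite_eq', mem_range]
      rw [if_pos (by omega), Nat.add_sub_cancel]
  have h_super : (if (i : ℕ) + 1 ∈ range (D + 1) then bb D i * Q (i + 1) else 0) =
      bb D i * Q (i + 1) := by
    split_ifs with h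
    · rfl
    · rw [show (i : ℕ) = D by simp only [mem_range] at h; omega, bb_self, zero_mul]
  refine (Fin.sum_univ_eq_sum_range (fun m => (if (i : ℕ) = m then aa D i
      else if m = i + 1 then bb D i else if (i : ℕ) = m + 1 then cc D i else 0) * Q m) _).trans ?_
  rw [sum_congr rfl h_split, sum_add_distrib, sum_add_distrib, h_sub, sum_ite_eq', sum_ite_eq',
    h_super, if_pos (mem_range.mpr i.is_lt)]

theorem PAstar_eq_AP (D : ℕ) (hD : 0 < D) : Pmat D * Astar D = Amat D * Pmat D := by
  ext i j
  rw [Astar, Matrix.mul_diagonal, Matrix.mul_apply]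
  calc Pmat D i j * theta D j
      = (2 * (j : ℝ) + 1) * (theta D j * F4 D i j) := by simp only [Pmat]; ring
    _ = (2 * (j : ℝ) + 1) *
          (cc D i * F4 D (i - 1) j + aa D i * F4 D i j + bb D i * F4 D (i + 1) j) := by
        rw [F4_recurrence hD.ne' i j.is_le]
    _ = ∑ m, Amat D i m * Pmat D m j := by
        simp only [Pmat]
        rw [sum_Amat_mul D i fun m => (2 * (j : ℝ) + 1) * F4 D m j]
        ring
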